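/- Let μ be a non-atomic Borel probability measure on [0,1]. For every q ≥ 0 and every a ≥ 0, β_a(q) = limsup_{r→0⁺} log( Σ_{B ∈ B_r^*} μ(B)^q ) / (−log r); that is, for nonnegative q the moment function defined via enlarged grid intervals coincides with the usual coarse multifractal moment function β₀(q). -/

import Mathlib

open MeasureTheory Filter Set
open scoped Classical

noncomputable section

/-- The enlargement `B̄^a` of the interval `[s,t]` by the factor `1+a` about its centre. -/
def enlarge (a s t : ℝ) : Set ℝ :=
  Set.Icc (s - a * (t - s) / 2) (t + a * (t - s) / 2)

/-- The moment sum `Σ_{B ∈ B_r^*} μ(B̄^a)^q` over grid intervals of length `r`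
whose interior meets the support of `μ` (i.e. with `μ(B) > 0`). -/
def gridSum (μ : Measure ℝ) (a q R : ℝ) : ℝ :=
  ∑' m : ℤ, if 0 < μ (Set.Icc ((m : ℝ) * R) (((m : ℝ) + 1) * R))
    then (μ (enlarge a ((m : ℝ) * R) (((m : ℝ) + 1) * R))).toReal ^ q else 0

/-- The coarse multifractal moment function
`β_a(q) = inf{β : limsup_{r→0⁺} r^β Σ_{B ∈ B_r^*} μ(B̄^a)^q = 0}`.
(For the nonnegative quantity `r^β · Σ…`, vanishing of the `limsup` as `r → 0⁺`
is the same as convergence to `0`.) -/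
def betaA (μ : Measure ℝ) (a q : ℝ) : ℝ :=
  sInf {β : ℝ | Filter.Tendsto (fun R => R ^ β * gridSum μ a q R)
    (nhdsWithin 0 (Set.Ioi 0)) (nhds 0)}

/-- `F` is a "fractal subset" of `[0,1]`: compact, Lebesgue-null, containing `0` and `1`. -/
def IsFractalSubset (F : Set ℝ) : Prop :=
  IsCompact F ∧ F ⊆ Set.Icc 0 1 ∧ (0 : ℝ) ∈ F ∧ (1 : ℝ) ∈ F ∧ MeasureTheory.volume F = 0

/-- The complementary intervals `I_n = (l n, r n)` of `F` in `[0,1]`, enumerated with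
nonincreasing lengths. -/
structure FractalComplement (F : Set ℝ) where
  l : ℕ → ℝ
  r : ℕ → ℝ
  lt : ∀ n, l n < r n
  disj : Pairwise fun n m => Disjoint (Set.Ioo (l n) (r n)) (Set.Ioo (l m) (r m))
  union : (⋃ n, Set.Ioo (l n) (r n)) = Set.Icc (0 : ℝ) 1 \ F
  mono : ∀ n, r (n + 1) - l (n + 1) ≤ r n - l n

/-- The length `|I_n|` of the `n`-th complementary interval. -/
def FractalComplement.len {F : Set ℝ} (c : FractalComplement F) (n : ℕ) : ℝ := c.r n - c.l n

/-- The enlargement `Ī_n^a` of the closure of the complementary interval `I_n`. -/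
def FractalComplement.I {F : Set ℝ} (c : FractalComplement F) (a : ℝ) (n : ℕ) : Set ℝ :=
  enlarge a (c.l n) (c.r n)

/-- The lacunarity condition with constant `lam`: every interval `[x-r, x+r]` with `x ∈ F`
and `0 < r ≤ 1` contains a complementary interval of length at least `lam * r`. -/
def Lacunary {F : Set ℝ} (c : FractalComplement F) (lam : ℝ) : Prop :=
  ∀ x ∈ F, ∀ R : ℝ, 0 < R → R ≤ 1 → ∃ n,
    Set.Ioo (c.l n) (c.r n) ⊆ Set.Icc (x - R) (x + R) ∧ lam * R ≤ c.len n

/-- The topological support of `μ` is exactly `F`. -/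
def HasSupport (μ : Measure ℝ) (F : Set ℝ) : Prop :=
  μ Fᶜ = 0 ∧ ∀ x ∈ F, ∀ ε : ℝ, 0 < ε → 0 < μ (Set.Ioo (x - ε) (x + ε))


/-!
The enlarged interval `B̄^a` of a grid interval `B ∈ B_r` is covered by the `N = 2⌈a⌉ + 1` grid
intervals nearest to `B`; the heaviest of them, `B'`, has `μ(B') ≥ μ(B) > 0`, so for `q ≥ 0`
`μ(B̄^a)^q ≤ N^q μ(B')^q`. Each `B'` arises from at most `N` intervals `B`, hence
`Σ μ(B)^q ≤ Σ μ(B̄^a)^q ≤ N^(q+1) Σ μ(B)^q` and the exponents `β` with `r^β Σ → 0` are the same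
for `a` and for `0`. Since moreover `r^(2q) ≤ Σ μ(B)^q ≤ r^(-2)` for small `r`, the infimum of
these exponents is `limsup log(Σ μ(B)^q) / (-log r)`.
-/

open Topology

section Exponents

lemma div_neg_log_le_iff {R x t : ℝ} (hR0 : 0 < R) (hR1 : R < 1) (hx : 0 < x) :
    Real.log x / -Real.log R ≤ t ↔ x ≤ R ^ (-t) := by
  have hlog : 0 < -Real.log R := neg_pos.mpr (Real.log_neg hR0 hR1)
  rw [div_le_iff₀ hlog, ← Real.log_le_log_iff hx (Real.rpow_pos_of_pos hR0 _),
    Real.log_rpow hR0]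
  constructor <;> intro h <;> linarith

lemma le_div_neg_log_iff {R x t : ℝ} (hR0 : 0 < R) (hR1 : R < 1) (hx : 0 < x) :
    t ≤ Real.log x / -Real.log R ↔ R ^ (-t) ≤ x := by
  have hlog : 0 < -Real.log R := neg_pos.mpr (Real.log_neg hR0 hR1)
  rw [le_div_iff₀ hlog, ← Real.log_le_log_iff (Real.rpow_pos_of_pos hR0 _) hx,
    Real.log_rpow hR0]
  constructor <;> intro h <;> linarith

/-- `betaA μ a q` is definitionally `sInf (decayExponents (gridSum μ a q))`. -/
def decayExponents (f : ℝ → ℝ) : Set ℝ :=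
  {β | Tendsto (fun R => R ^ β * f R) (𝓝[>] 0) (𝓝 0)}

variable {f g : ℝ → ℝ} {β : ℝ}

lemma mem_decayExponents_of_le_mul {C : ℝ} (hg : ∀ᶠ R in 𝓝[>] 0, 0 ≤ g R)
    (hgf : ∀ᶠ R in 𝓝[>] 0, g R ≤ C * f R) (hβ : β ∈ decayExponents f) :
    β ∈ decayExponents g := by
  have hC : Tendsto (fun R => C * (R ^ β * f R)) (𝓝[>] 0) (𝓝 0) := by
    simpa using hβ.const_mul C
  refine squeeze_zero' ?_ ?_ hC
  · filter_upwards [hg, self_mem_nhdsWithin] with R hgR hR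
    exact mul_nonneg (Real.rpow_nonneg (le_of_lt hR) β) hgR
  · filter_upwards [hgf, self_mem_nhdsWithin] with R hgfR hR
    calc R ^ β * g R ≤ R ^ β * (C * f R) :=
          mul_le_mul_of_nonneg_left hgfR (Real.rpow_nonneg (le_of_lt hR) β)
      _ = C * (R ^ β * f R) := by ring

lemma decayExponents_eq_of_le_of_le_mul {C : ℝ} (hf : ∀ᶠ R in 𝓝[>] 0, 0 ≤ f R)
    (hfg : ∀ᶠ R in 𝓝[>] 0, f R ≤ g R) (hgf : ∀ᶠ R in 𝓝[>] 0, g R ≤ C * f R) :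
    decayExponents g = decayExponents f := by
  have hg : ∀ᶠ R in 𝓝[>] 0, 0 ≤ g R := (hf.and hfg).mono fun _ h => h.1.trans h.2
  ext β
  exact ⟨mem_decayExponents_of_le_mul hf (hfg.mono fun _ h => by rwa [one_mul]),
    mem_decayExponents_of_le_mul hg hgf⟩

lemma tendsto_rpow_nhdsGT_zero {c : ℝ} (hc : 0 < c) :
    Tendsto (fun R : ℝ => R ^ c) (𝓝[>] 0) (𝓝 0) := by
  simpa [Real.zero_rpow hc.ne'] using
    ((Real.continuousAt_rpow_const 0 c (Or.inr hc.le)).tendsto).mono_left nhdsWithin_le_nhds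

lemma mem_decayExponents_of_le_rpow {t : ℝ} (hf : ∀ᶠ R in 𝓝[>] 0, 0 ≤ f R)
    (hup : ∀ᶠ R in 𝓝[>] 0, f R ≤ R ^ (-t)) (hβ : t < β) : β ∈ decayExponents f := by
  refine squeeze_zero' ?_ ?_ (tendsto_rpow_nhdsGT_zero (sub_pos.mpr hβ))
  · filter_upwards [hf, self_mem_nhdsWithin] with R hfR hR
    exact mul_nonneg (Real.rpow_nonneg (le_of_lt hR) β) hfR
  · filter_upwards [hup, self_mem_nhdsWithin] with R hupR hR
    calc R ^ β * f R ≤ R ^ β * R ^ (-t) :=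
          mul_le_mul_of_nonneg_left hupR (Real.rpow_nonneg (le_of_lt hR) β)
      _ = R ^ (β - t) := by rw [← Real.rpow_add hR, sub_eq_add_neg]

lemma eventually_le_rpow_of_mem_decayExponents (hβ : β ∈ decayExponents f) :
    ∀ᶠ R in 𝓝[>] 0, f R ≤ R ^ (-β) := by
  filter_upwards [hβ.eventually_le_const zero_lt_one, self_mem_nhdsWithin] with R hR hR0
  have hpos : 0 < R ^ β := Real.rpow_pos_of_pos hR0 β
  rwa [Real.rpow_neg (le_of_lt hR0), ← one_div, le_div_iff₀' hpos]

theorem sInf_decayExponents_eq_limsup {s t : ℝ} (hlow : ∀ᶠ R in 𝓝[>] 0, R ^ s ≤ f R)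
    (hup : ∀ᶠ R in 𝓝[>] 0, f R ≤ R ^ (-t)) :
    sInf (decayExponents f) = limsup (fun R => Real.log (f R) / -Real.log R) (𝓝[>] 0) := by
  set L := limsup (fun R => Real.log (f R) / -Real.log R) (𝓝[>] 0)
  have hpos : ∀ᶠ R in 𝓝[>] 0, 0 < f R := by
    filter_upwards [hlow, self_mem_nhdsWithin] with R hR hR0
    exact (Real.rpow_pos_of_pos hR0 s).trans_le hR
  have hratio_le {b : ℝ} (hb : ∀ᶠ R in 𝓝[>] 0, f R ≤ R ^ (-b)) :
      ∀ᶠ R in 𝓝[>] 0, Real.log (f R) / -Real.log R ≤ b := by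
    filter_upwards [hb, hpos, Ioo_mem_nhdsGT one_pos] with R hbR hR ⟨hR0, hR1⟩
    exact (div_neg_log_le_iff hR0 hR1 hR).mpr hbR
  have hcobdd : IsCoboundedUnder (· ≤ ·) (𝓝[>] 0) (fun R => Real.log (f R) / -Real.log R) := by
    refine isCoboundedUnder_le_of_eventually_le _ (x := -s) ?_
    filter_upwards [hlow, hpos, Ioo_mem_nhdsGT one_pos] with R hlowR hR ⟨hR0, hR1⟩
    exact (le_div_neg_log_iff hR0 hR1 hR).mpr (by rwa [neg_neg])
  have hbdd : IsBoundedUnder (· ≤ ·) (𝓝[>] 0) (fun R => Real.log (f R) / -Real.log R) :=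
    isBoundedUnder_of_eventually_le (hratio_le hup)
  have hge : ∀ β ∈ decayExponents f, L ≤ β := fun β hβ =>
    limsup_le_of_le hcobdd (hratio_le (eventually_le_rpow_of_mem_decayExponents hβ))
  have hIoi : Ioi L ⊆ decayExponents f := by
    intro β hβ
    obtain ⟨b, hLb, hbβ⟩ := exists_between (mem_Ioi.mp hβ)
    refine mem_decayExponents_of_le_rpow (hpos.mono fun R => le_of_lt) ?_ hbβ
    filter_upwards [eventually_lt_of_limsup_lt hLb hbdd, hpos, Ioo_mem_nhdsGT one_pos]
      with R hbR hR ⟨hR0, hR1⟩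
    exact (div_neg_log_le_iff hR0 hR1 hR).mp hbR.le
  refine le_antisymm ?_ (le_csInf ⟨L + 1, hIoi (lt_add_one L)⟩ hge)
  calc sInf (decayExponents f) ≤ sInf (Ioi L) :=
        csInf_le_csInf ⟨L, hge⟩ nonempty_Ioi hIoi
    _ = L := csInf_Ioi

end Exponents

section Grid

def gridInterval (R : ℝ) (m : ℤ) : Set ℝ := Icc (m * R) ((m + 1) * R)

def gridTerm (μ : Measure ℝ) (a q R : ℝ) (m : ℤ) : ℝ :=
  if 0 < μ (gridInterval R m) then μ.real (enlarge a (m * R) ((m + 1) * R)) ^ q else 0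

lemma gridSum_eq_tsum (μ : Measure ℝ) (a q R : ℝ) :
    gridSum μ a q R = ∑' m, gridTerm μ a q R m := rfl

lemma enlarge_zero (s t : ℝ) : enlarge 0 s t = Icc s t := by
  simp [enlarge]

lemma Icc_subset_biUnion_gridInterval {R : ℝ} (hR : 0 < R) {lo hi : ℤ} (h : lo ≤ hi) :
    Icc (lo * R) ((hi + 1) * R) ⊆ ⋃ m ∈ Finset.Icc lo hi, gridInterval R m := by
  rintro x ⟨hlo, hhi⟩
  have hfloor : lo ≤ ⌊x / R⌋ := Int.le_floor.mpr ((le_div_iff₀ hR).mpr hlo)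
  refine mem_iUnion₂.mpr ⟨min ⌊x / R⌋ hi, Finset.mem_Icc.mpr ⟨le_min hfloor h, min_le_right _ _⟩,
    ?_, ?_⟩
  · calc ((min ⌊x / R⌋ hi : ℤ) : ℝ) * R ≤ ⌊x / R⌋ * R := by
          gcongr; exact_mod_cast min_le_left _ _
      _ ≤ x := (le_div_iff₀ hR).mp (Int.floor_le _)
  · rcases le_total ⌊x / R⌋ hi with hle | hle
    · rw [min_eq_left hle]
      exact ((div_lt_iff₀ hR).mp (Int.lt_floor_add_one _)).le
    · rwa [min_eq_right hle]

-- `m = -1` is included because the closed interval `[-r, 0]` contains `0`.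
def gridIndices (R : ℝ) : Finset ℤ := Finset.Icc (-1) ⌊1 / R⌋

lemma Icc_subset_biUnion_gridIndices {R : ℝ} (hR : 0 < R) :
    Icc 0 1 ⊆ ⋃ m ∈ gridIndices R, gridInterval R m := by
  have hfloor : (0 : ℤ) ≤ ⌊1 / R⌋ := Int.floor_nonneg.mpr (by positivity)
  refine (Icc_subset_Icc ?_ ?_).trans (Icc_subset_biUnion_gridInterval hR (by omega))
  · push_cast; linarith
  · exact ((div_lt_iff₀ hR).mp (Int.lt_floor_add_one _)).le

lemma gridInterval_subset_compl {R : ℝ} (hR : 0 < R) {m : ℤ} (hm : m ∉ gridIndices R) :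
    gridInterval R m ⊆ (Icc 0 1)ᶜ := by
  rintro x ⟨hxl, hxr⟩ ⟨hx0, hx1⟩
  rcases not_and_or.mp (Finset.mem_Icc.not.mp hm) with hm | hm
  · have : (m : ℝ) + 1 ≤ -1 := by exact_mod_cast (by omega : m + 1 ≤ -1)
    nlinarith
  · have : 1 < m * R := (div_lt_iff₀ hR).mp (Int.floor_lt.mp (not_le.mp hm))
    linarith

lemma card_gridIndices_le {R : ℝ} (hR : 0 < R) (hR1 : R ≤ 1) :
    ((gridIndices R).card : ℝ) ≤ 3 / R := by
  have hfloor : (0 : ℤ) ≤ ⌊1 / R⌋ := Int.floor_nonneg.mpr (by positivity)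
  have hcard : ((gridIndices R).card : ℝ) = ⌊1 / R⌋ + 2 := by
    have : ((gridIndices R).card : ℤ) = ⌊1 / R⌋ + 2 := by
      simp only [gridIndices, Int.card_Icc]; omega
    exact_mod_cast this
  have h2 : (2 : ℝ) ≤ 2 / R := by rw [le_div_iff₀ hR]; linarith
  rw [hcard, show 3 / R = 1 / R + 2 / R by ring]
  linarith [Int.floor_le (1 / R)]

variable {μ : Measure ℝ} {a q R : ℝ} {m : ℤ}

lemma gridTerm_nonneg : 0 ≤ gridTerm μ a q R m := by
  unfold gridTerm; split <;> positivity

lemma gridTerm_le_one [IsProbabilityMeasure μ] (hq : 0 ≤ q) : gridTerm μ a q R m ≤ 1 := by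
  unfold gridTerm; split
  · exact Real.rpow_le_one measureReal_nonneg measureReal_le_one hq
  · exact zero_le_one

lemma gridTerm_zero_of_pos (h : 0 < μ (gridInterval R m)) :
    gridTerm μ 0 q R m = μ.real (gridInterval R m) ^ q := by
  rw [gridTerm, if_pos h, enlarge_zero, gridInterval]

lemma gridTerm_eq_zero (hsupp : μ (Icc (0 : ℝ) 1)ᶜ = 0) (hR : 0 < R) (hm : m ∉ gridIndices R) :
    gridTerm μ a q R m = 0 := by
  have : μ (gridInterval R m) = 0 := measure_mono_null (gridInterval_subset_compl hR hm) hsupp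
  simp [gridTerm, this]

lemma summable_gridTerm (hsupp : μ (Icc (0 : ℝ) 1)ᶜ = 0) (hR : 0 < R) :
    Summable (gridTerm μ a q R) :=
  summable_of_ne_finset_zero fun _ hm => gridTerm_eq_zero hsupp hR hm

lemma gridSum_nonneg : 0 ≤ gridSum μ a q R :=
  tsum_nonneg fun _ => gridTerm_nonneg

lemma gridSum_le [IsProbabilityMeasure μ] (hsupp : μ (Icc (0 : ℝ) 1)ᶜ = 0) (hq : 0 ≤ q)
    (hR : 0 < R) (hR1 : R ≤ 1) : gridSum μ a q R ≤ 3 / R := by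
  rw [gridSum_eq_tsum, tsum_eq_sum fun _ hm => gridTerm_eq_zero hsupp hR hm]
  calc ∑ m ∈ gridIndices R, gridTerm μ a q R m ≤ ∑ _m ∈ gridIndices R, (1 : ℝ) :=
        Finset.sum_le_sum fun _ _ => gridTerm_le_one hq
    _ = (gridIndices R).card := by simp
    _ ≤ 3 / R := card_gridIndices_le hR hR1

lemma exists_le_measureReal_gridInterval [IsProbabilityMeasure μ]
    (hsupp : μ (Icc (0 : ℝ) 1)ᶜ = 0) (hR : 0 < R) (hR1 : R ≤ 1) :
    ∃ m, R / 3 ≤ μ.real (gridInterval R m) := by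
  have hmass : μ.real (Icc (0 : ℝ) 1) = 1 := by
    rw [measureReal_def, (prob_compl_eq_zero_iff measurableSet_Icc).mp hsupp, ENNReal.toReal_one]
  have hcover : ∑ _m ∈ gridIndices R, R / 3 ≤ ∑ m ∈ gridIndices R, μ.real (gridInterval R m) :=
    calc ∑ _m ∈ gridIndices R, R / 3 = (gridIndices R).card * R / 3 := by
          rw [Finset.sum_const, nsmul_eq_mul, mul_div_assoc]
      _ ≤ 3 / R * R / 3 := by gcongr; exact card_gridIndices_le hR hR1
      _ = μ.real (Icc (0 : ℝ) 1) := by rw [hmass]; field_simp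
      _ ≤ _ := (measureReal_mono (Icc_subset_biUnion_gridIndices hR) (measure_ne_top μ _)).trans
          (measureReal_biUnion_finset_le _ _)
  have hne : (gridIndices R).Nonempty :=
    Finset.nonempty_Icc.mpr ((Int.floor_nonneg.mpr (by positivity)).trans' (by norm_num))
  obtain ⟨m, -, hm⟩ := Finset.exists_le_of_sum_le hne hcover
  exact ⟨m, hm⟩

lemma rpow_two_mul_le_gridSum_zero [IsProbabilityMeasure μ] (hsupp : μ (Icc (0 : ℝ) 1)ᶜ = 0)
    (hq : 0 ≤ q) (hR : 0 < R) (hR3 : R ≤ 1 / 3) : R ^ (2 * q) ≤ gridSum μ 0 q R := by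
  obtain ⟨m, hm⟩ := exists_le_measureReal_gridInterval hsupp hR (by linarith)
  have hpos : 0 < μ (gridInterval R m) :=
    (ENNReal.toReal_pos_iff.mp ((div_pos hR three_pos).trans_le hm)).1
  calc R ^ (2 * q) = (R ^ (2 : ℝ)) ^ q := by rw [Real.rpow_mul hR.le]
    _ ≤ (R / 3) ^ q := by
        gcongr; rw [Real.rpow_two]; nlinarith
    _ ≤ gridTerm μ 0 q R m := by
        rw [gridTerm_zero_of_pos hpos]; gcongr
    _ ≤ gridSum μ 0 q R :=
        (summable_gridTerm hsupp hR).le_tsum m fun _ _ => gridTerm_nonneg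

lemma gridSum_le_rpow_neg_two [IsProbabilityMeasure μ] (hsupp : μ (Icc (0 : ℝ) 1)ᶜ = 0)
    (hq : 0 ≤ q) (hR : 0 < R) (hR3 : R ≤ 1 / 3) : gridSum μ a q R ≤ R ^ (-2 : ℝ) :=
  calc gridSum μ a q R ≤ 3 / R := gridSum_le hsupp hq hR (by linarith)
    _ ≤ 1 / R / R := by gcongr; rw [le_div_iff₀ hR]; linarith
    _ = R ^ (-2 : ℝ) := by rw [Real.rpow_neg hR.le, Real.rpow_two]; field_simp

end Grid

section Comparison

variable {μ : Measure ℝ} {a q R : ℝ}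

lemma gridInterval_subset_enlarge (ha : 0 ≤ a) (hR : 0 ≤ R) (m : ℤ) :
    gridInterval R m ⊆ enlarge a (m * R) ((m + 1) * R) := by
  have hw : 0 ≤ a * ((m + 1) * R - m * R) / 2 := by
    rw [show ((m : ℝ) + 1) * R - m * R = R by ring]; positivity
  exact Icc_subset_Icc (by linarith) (by linarith)

lemma gridSum_zero_le_gridSum [IsFiniteMeasure μ] (hsupp : μ (Icc (0 : ℝ) 1)ᶜ = 0)
    (hq : 0 ≤ q) (ha : 0 ≤ a) (hR : 0 < R) : gridSum μ 0 q R ≤ gridSum μ a q R := by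
  refine Summable.tsum_le_tsum (fun m => ?_) (summable_gridTerm hsupp hR)
    (summable_gridTerm hsupp hR)
  show gridTerm μ 0 q R m ≤ gridTerm μ a q R m
  unfold gridTerm
  split
  · rw [enlarge_zero]
    exact Real.rpow_le_rpow measureReal_nonneg
      (measureReal_mono (gridInterval_subset_enlarge ha hR.le m) (measure_ne_top μ _)) hq
  · exact le_rfl

def enlargeIndices (a : ℝ) : Finset ℤ := Finset.Icc (-(⌈a⌉₊ : ℤ)) ⌈a⌉₊

lemma enlarge_subset_biUnion_gridInterval (ha : 0 ≤ a) (hR : 0 < R) (m : ℤ) :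
    enlarge a (m * R) ((m + 1) * R) ⊆ ⋃ j ∈ enlargeIndices a, gridInterval R (m + j) := by
  set k : ℤ := (⌈a⌉₊ : ℤ)
  have hak : a ≤ k := by simpa [k] using Nat.le_ceil a
  have hk : 0 ≤ k := by positivity
  have hsub : enlarge a (m * R) ((m + 1) * R) ⊆ Icc ((m - k : ℤ) * R) (((m + k : ℤ) + 1) * R) := by
    unfold enlarge
    rw [show ((m : ℝ) + 1) * R - m * R = R by ring]
    apply Icc_subset_Icc <;> push_cast <;>
      nlinarith [mul_le_mul_of_nonneg_right hak hR.le, mul_nonneg ha hR.le]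
  refine hsub.trans ((Icc_subset_biUnion_gridInterval hR (by omega)).trans ?_)
  refine iUnion₂_subset fun n hn => ?_
  have hj : n - m ∈ enlargeIndices a := by
    simp only [enlargeIndices, Finset.mem_Icc] at hn ⊢; omega
  exact subset_iUnion₂_of_subset (n - m) hj (by rw [add_sub_cancel])

lemma gridTerm_le_sum [IsFiniteMeasure μ] (hq : 0 ≤ q) (ha : 0 ≤ a) (hR : 0 < R) (m : ℤ) :
    gridTerm μ a q R m ≤ ((enlargeIndices a).card : ℝ) ^ q *
      ∑ j ∈ enlargeIndices a, gridTerm μ 0 q R (m + j) := by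
  set J := enlargeIndices a
  by_cases hm : 0 < μ (gridInterval R m)
  swap
  · rw [gridTerm, if_neg hm]
    exact mul_nonneg (by positivity) (Finset.sum_nonneg fun _ _ => gridTerm_nonneg)
  have h0J : (0 : ℤ) ∈ J := by simp [J, enlargeIndices]
  obtain ⟨j₀, hj₀, hmax⟩ :=
    J.exists_max_image (fun j => μ.real (gridInterval R (m + j))) ⟨0, h0J⟩
  -- the heaviest neighbour is at least as heavy as `B` itself, so it lies in `B_r^*`
  have hpos : 0 < μ (gridInterval R (m + j₀)) := by
    have hle := hmax 0 h0J
    rw [add_zero] at hle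
    exact (ENNReal.toReal_pos_iff.mp
      ((ENNReal.toReal_pos hm.ne' (measure_ne_top μ _)).trans_le hle)).1
  have hcover : μ.real (enlarge a (m * R) ((m + 1) * R)) ≤
      J.card * μ.real (gridInterval R (m + j₀)) :=
    calc _ ≤ ∑ j ∈ J, μ.real (gridInterval R (m + j)) :=
          (measureReal_mono (enlarge_subset_biUnion_gridInterval ha hR m)
            (measure_ne_top μ _)).trans (measureReal_biUnion_finset_le _ _)
      _ ≤ J.card * μ.real (gridInterval R (m + j₀)) := by
          simpa using Finset.sum_le_card_nsmul J _ _ hmax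
  calc gridTerm μ a q R m = μ.real (enlarge a (m * R) ((m + 1) * R)) ^ q := if_pos hm
    _ ≤ (J.card * μ.real (gridInterval R (m + j₀))) ^ q :=
        Real.rpow_le_rpow measureReal_nonneg hcover hq
    _ = J.card ^ q * gridTerm μ 0 q R (m + j₀) := by
        rw [Real.mul_rpow (by positivity) measureReal_nonneg, gridTerm_zero_of_pos hpos]
    _ ≤ _ := by
        gcongr
        exact Finset.single_le_sum (f := fun j => gridTerm μ 0 q R (m + j))
          (fun _ _ => gridTerm_nonneg) hj₀

lemma gridSum_le_mul_gridSum_zero [IsFiniteMeasure μ] (hsupp : μ (Icc (0 : ℝ) 1)ᶜ = 0)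
    (hq : 0 ≤ q) (ha : 0 ≤ a) (hR : 0 < R) :
    gridSum μ a q R ≤
      ((enlargeIndices a).card : ℝ) ^ q * (enlargeIndices a).card * gridSum μ 0 q R := by
  set J := enlargeIndices a
  have hshift : ∀ j ∈ J, Summable fun m => gridTerm μ 0 q R (m + j) := fun j _ =>
    (summable_gridTerm hsupp hR).comp_injective (add_left_injective j)
  calc gridSum μ a q R = ∑' m, gridTerm μ a q R m := gridSum_eq_tsum μ a q R
    _ ≤ ∑' m, (J.card : ℝ) ^ q * ∑ j ∈ J, gridTerm μ 0 q R (m + j) :=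
        Summable.tsum_le_tsum (fun m => gridTerm_le_sum hq ha hR m) (summable_gridTerm hsupp hR)
          ((summable_sum hshift).mul_left _)
    _ = J.card ^ q * ∑ j ∈ J, ∑' m, gridTerm μ 0 q R (m + j) := by
        rw [tsum_mul_left, Summable.tsum_finsetSum hshift]
    _ = J.card ^ q * J.card * gridSum μ 0 q R := by
        rw [Finset.sum_congr rfl fun j _ => by exact (Equiv.addRight j).tsum_eq (gridTerm μ 0 q R),
          Finset.sum_const, nsmul_eq_mul, gridSum_eq_tsum, mul_assoc]

end Comparison

theorem stmt_6_general (μ : Measure ℝ) [IsProbabilityMeasure μ]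
    (hsupp : μ (Set.Icc (0 : ℝ) 1)ᶜ = 0)
    (q a : ℝ) (hq : 0 ≤ q) (ha : 0 ≤ a) :
    betaA μ a q =
      Filter.limsup (fun R : ℝ => Real.log (gridSum μ 0 q R) / (-Real.log R))
        (nhdsWithin 0 (Set.Ioi 0)) := by
  have hexp : decayExponents (gridSum μ a q) = decayExponents (gridSum μ 0 q) :=
    decayExponents_eq_of_le_of_le_mul (Eventually.of_forall fun _ => gridSum_nonneg)
      (eventually_nhdsWithin_of_forall fun _ hR => gridSum_zero_le_gridSum hsupp hq ha hR)
      (eventually_nhdsWithin_of_forall fun _ hR => gridSum_le_mul_gridSum_zero hsupp hq ha hR)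
  have hsmall : Ioc (0 : ℝ) (1 / 3) ∈ 𝓝[>] (0 : ℝ) := Ioc_mem_nhdsGT (by norm_num)
  refine (congrArg sInf hexp).trans (sInf_decayExponents_eq_limsup (s := 2 * q) (t := 2) ?_ ?_)
  · filter_upwards [hsmall] with R ⟨hR0, hR3⟩
    exact rpow_two_mul_le_gridSum_zero hsupp hq hR0 hR3
  · filter_upwards [hsmall] with R ⟨hR0, hR3⟩
    exact gridSum_le_rpow_neg_two hsupp hq hR0 hR3

/-- for `q ≥ 0` and any `a ≥ 0`, the moment function `β_a(q)` defined via
enlarged grid intervals coincides with the usual coarse moment function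
`β₀(q) = limsup_{r→0⁺} log(Σ_{B ∈ B_r^*} μ(B)^q)/(-log r)`. -/
theorem stmt_6 (μ : Measure ℝ) [IsProbabilityMeasure μ] [NullSingletonClass μ]
    (hsupp : μ (Set.Icc (0 : ℝ) 1)ᶜ = 0)
    (q a : ℝ) (hq : 0 ≤ q) (ha : 0 ≤ a) :
    betaA μ a q =
      Filter.limsup (fun R : ℝ => Real.log (gridSum μ 0 q R) / (-Real.log R))
        (nhdsWithin 0 (Set.Ioi 0)) :=
  stmt_6_general μ hsupp q a hq ha
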